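/- arXiv:1901.07647 — 3 statements merged into one kernel-verified Lean document; each statement's English description precedes it below -/
import Mathlib

section
/- Fix m, channel numbers q₀ = 1, q₁, …, q_κ, and for each l ∈ [κ] let E^l ∈ ℝ^{mq_{l−1}×mq_l} be the block matrix whose (k,j) block (k ∈ [q_{l−1}], j ∈ [q_l]) is the circulant I_m ⊛ ψ^l_{j,k}, for filters ψ^l_{j,k} ∈ ℝʳ zero-padded to ℝᵐ (the pooling-free encoder matrices). Then for every l ∈ [κ] and every t ∈ [q_l], the t-th m×m block of the product E¹E²⋯E^l equals I_m ⊛ (Σ_{j₁=1}^{q₁} ⋯ Σ_{j_{l−1}=1}^{q_{l−1}} ψ¹_{j₁,1} ⊛ ψ²_{j₂,j₁} ⊛ ⋯ ⊛ ψ^l_{t,j_{l−1}}); that is, in the absence of pooling the frame basis consists of cascaded circular convolutions of the layer filters. -/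
open Matrix

/-- Circular convolution on `ℝ^m`, indexed by `ZMod m`:
`(x ⊛ ψ)[k] = Σ_j x[j] ψ[k − j]`. -/
def cconv {m : ℕ} [NeZero m] (x ψ : ZMod m → ℝ) : ZMod m → ℝ :=
  fun k => ∑ j : ZMod m, x j * ψ (k - j)

/-- Zero-padding of a filter `ψ ∈ ℝ^r` to a vector in `ℝ^m`. -/
def pad {m r : ℕ} [NeZero m] (ψ : Fin r → ℝ) : ZMod m → ℝ :=
  fun k => ∑ j : Fin r, if ((j : ℕ) : ZMod m) = k then ψ j else 0

/-- The Kronecker delta vector (identity element for circular convolution). -/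
def deltaV {m : ℕ} : ZMod m → ℝ := fun k => if k = 0 then 1 else 0

/-- The product `E¹ E² ⋯ E^l` of the pooling-free encoder matrices
(`chainProdE … 0 = I`). -/
def chainProdE {m : ℕ} [NeZero m] (q : ℕ → ℕ)
    (E : (l : ℕ) → Matrix (Fin (q l) × ZMod m) (Fin (q (l + 1)) × ZMod m) ℝ) :
    (l : ℕ) → Matrix (Fin (q 0) × ZMod m) (Fin (q l) × ZMod m) ℝ
  | 0 => 1
  | l + 1 => chainProdE q E l * E l

/-- The cascaded convolution filter
`Σ_{j₁,…,j_{l−1}} ψ¹_{j₁,1} ⊛ ψ²_{j₂,j₁} ⊛ ⋯ ⊛ ψ^l_{t,j_{l−1}}`, defined recursively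
(with the convolution identity `δ` at level 0). -/
def casc {m r : ℕ} [NeZero m] (q : ℕ → ℕ)
    (ψ : (l : ℕ) → Fin (q (l + 1)) → Fin (q l) → Fin r → ℝ) :
    (l : ℕ) → Fin (q l) → ZMod m → ℝ
  | 0, _ => deltaV
  | l + 1, t => ∑ j : Fin (q l), cconv (casc q ψ l j) (pad (ψ l t j))

/-- For the pooling-free encoder matrices `E^l` (block `(k,j)` of `E^l`
is the circulant `I_m ⊛ ψ^l_{j,k}`), with a single input channel `q₀ = 1`,
for every `l ∈ [κ]` the `t`-th `m×m` block of `E¹E²⋯E^l` is the circulant of the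
cascaded convolution `Σ_{j₁,…,j_{l−1}} ψ¹_{j₁,1} ⊛ ⋯ ⊛ ψ^l_{t,j_{l−1}}`. -/
theorem stmt_6 {m r κ : ℕ} [NeZero m] (hr : r ≤ m)
    (q : ℕ → ℕ) (hq0 : q 0 = 1)
    (ψ : (l : ℕ) → Fin (q (l + 1)) → Fin (q l) → Fin r → ℝ)
    (E : (l : ℕ) → Matrix (Fin (q l) × ZMod m) (Fin (q (l + 1)) × ZMod m) ℝ)
    (hE : ∀ l k j i i', E l (k, i) (j, i') = Matrix.circulant (pad (ψ l j k)) i i')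
    (l : ℕ) (hl1 : 1 ≤ l) (hlκ : l ≤ κ) :
    ∀ (s : Fin (q 0)) (t : Fin (q l)) (i i' : ZMod m),
      chainProdE q E l (s, i) (t, i') = Matrix.circulant (casc q ψ l t) i i' := by
  clear hr hl1 hlκ
  induction l with
  | zero =>
    intro s t i i'
    have hs := s.isLt; have ht := t.isLt
    have hst : s = t := Fin.ext (by omega)
    simp [chainProdE, Matrix.one_apply, Matrix.circulant_apply, deltaV, casc, hst,
      Prod.ext_iff, sub_eq_zero, eq_comm]
  | succ l ih =>
    intro s t i i'
    show (chainProdE q E l * E l) (s, i) (t, i') = _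
    rw [Matrix.mul_apply, Fintype.sum_prod_type]
    simp only [ih, hE, Matrix.circulant_apply, casc, Finset.sum_apply]
    refine Finset.sum_congr rfl fun j _ => ?_
    rw [cconv]
    refine Fintype.sum_equiv (Equiv.subLeft i) _ _ fun x => ?_
    simp [Equiv.subLeft]
end

section
/- Let T, s, d, d₀ be positive integers with s ≥ T and d ≥ d₀. Let Γ = [χ₁, …, χ_T] ∈ ℝ^{s×T}, let D_i ∈ ℝ^{d×d₀} for i ∈ [T], and let r_i ∈ ℝ^{d₀} for i ∈ [T]; set G := Σ_{i=1}^T (χ_i ⊗ I_d) D_i r_i ∈ ℝ^{sd} and ‖R‖₂ := (Σ_{i=1}^T ‖r_i‖₂²)^{1/2}. Then σ_min(Γ) · min_{i ∈ [T]} σ_min(D_i) · ‖R‖₂ ≤ ‖G‖₂ ≤ σ_max(Γ) · max_{i ∈ [T]} σ_max(D_i) · ‖R‖₂. (In the paper, G equals the negative gradient with respect to the skip weight S̃^l of the squared loss C(W) = ½Σ_i‖F(W,x^{(i)}) − y^{(i)}‖², with Γ the matrix of skipped features χ^{l(i)}, D_i = Λ̃^l(x^{(i)})(Υ̃^{l−1}(x^{(i)}))ᵀ,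 r_i the residuals, and ‖R‖₂ = √(2C(W)).) -/
open Matrix

/-- The Euclidean (ℓ²) norm of a vector. -/
noncomputable def enorm2 {ι : Type*} [Fintype ι] (v : ι → ℝ) : ℝ :=
  Real.sqrt (∑ i, v i ^ 2)

/-- The largest singular value `σ_max(A) = max_{‖u‖₂=1} ‖Au‖₂` (the spectral norm). -/
noncomputable def smax {ι ι' : Type*} [Fintype ι] [Fintype ι'] (A : Matrix ι ι' ℝ) : ℝ :=
  ⨆ u : {u : ι' → ℝ // enorm2 u = 1}, enorm2 (A.mulVec u.1)

/-- The smallest singular value `σ_min(A) = min_{‖u‖₂=1} ‖Au‖₂`. -/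
noncomputable def smin {ι ι' : Type*} [Fintype ι] [Fintype ι'] (A : Matrix ι ι' ℝ) : ℝ :=
  ⨅ u : {u : ι' → ℝ // enorm2 u = 1}, enorm2 (A.mulVec u.1)

/-! Read `G` as the `s × d` matrix whose `a`-th column is `Γ v_a`, where `v_a = ((D_i r_i)_a)_i`;
that is, `G = (Γ ⊗ I_d) W` for the stacked vector `W = (D_i r_i)_i`. Acting column by column, `Γ`
scales `‖W‖` by a factor between `σ_min(Γ)` and `σ_max(Γ)`; acting block by block, the `D_i`
scale `‖R‖` by a factor between `min_i σ_min(D_i)` and `max_i σ_max(D_i)`. -/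

section EuclideanNorm

variable {ι : Type*} [Fintype ι]

lemma enorm2_eq_norm (v : ι → ℝ) : enorm2 v = ‖WithLp.toLp 2 v‖ := by
  simp [enorm2, EuclideanSpace.norm_eq]

lemma enorm2_nonneg (v : ι → ℝ) : 0 ≤ enorm2 v := Real.sqrt_nonneg _

lemma enorm2_sq (v : ι → ℝ) : enorm2 v ^ 2 = ∑ i, v i ^ 2 :=
  Real.sq_sqrt (Finset.sum_nonneg fun _ _ => sq_nonneg _)

lemma enorm2_smul (c : ℝ) (v : ι → ℝ) : enorm2 (c • v) = |c| * enorm2 v := by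
  rw [enorm2_eq_norm, enorm2_eq_norm, WithLp.toLp_smul, norm_smul, Real.norm_eq_abs]

lemma enorm2_eq_zero {v : ι → ℝ} : enorm2 v = 0 ↔ v = 0 := by
  rw [enorm2_eq_norm, norm_eq_zero, WithLp.toLp_eq_zero]

lemma exists_enorm2_eq_one_smul {v : ι → ℝ} (hv : v ≠ 0) :
    ∃ u, enorm2 u = 1 ∧ v = enorm2 v • u := by
  have hpos : enorm2 v ≠ 0 := enorm2_eq_zero.not.mpr hv
  refine ⟨(enorm2 v)⁻¹ • v, ?_, ?_⟩
  · rw [enorm2_smul, abs_inv, abs_of_nonneg (enorm2_nonneg v), inv_mul_cancel₀ hpos]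
  · rw [smul_smul, mul_inv_cancel₀ hpos, one_smul]

lemma enorm2_le_enorm2 {f g : ι → ℝ} (hf : 0 ≤ f) (hfg : f ≤ g) : enorm2 f ≤ enorm2 g :=
  Real.sqrt_le_sqrt <| Finset.sum_le_sum fun i _ => pow_le_pow_left₀ (hf i) (hfg i) 2

lemma mul_enorm2_le_enorm2 {c : ℝ} (hc : 0 ≤ c) {f g : ι → ℝ} (hf : 0 ≤ f)
    (h : ∀ i, c * f i ≤ g i) : c * enorm2 f ≤ enorm2 g := by
  rw [← abs_of_nonneg hc, ← enorm2_smul]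
  exact enorm2_le_enorm2 (fun i => mul_nonneg hc (hf i)) h

lemma enorm2_le_mul_enorm2 {c : ℝ} (hc : 0 ≤ c) {f g : ι → ℝ} (hf : 0 ≤ f)
    (h : ∀ i, f i ≤ c * g i) : enorm2 f ≤ c * enorm2 g := by
  rw [← abs_of_nonneg hc, ← enorm2_smul]
  exact enorm2_le_enorm2 hf h

end EuclideanNorm

section SingularValues

variable {ι ι' : Type*} [Fintype ι] [Fintype ι']

open scoped Matrix.Norms.L2Operator in
lemma bddAbove_enorm2_mulVec_sphere (A : Matrix ι ι' ℝ) :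
    BddAbove (Set.range fun u : {u : ι' → ℝ // enorm2 u = 1} => enorm2 (A *ᵥ u.1)) := by
  classical
  refine ⟨‖A‖, ?_⟩
  rintro _ ⟨⟨u, hu⟩, rfl⟩
  rw [enorm2_eq_norm] at hu
  simpa [enorm2_eq_norm, hu] using A.l2_opNorm_mulVec (WithLp.toLp 2 u)

lemma smin_nonneg (A : Matrix ι ι' ℝ) : 0 ≤ smin A :=
  Real.iInf_nonneg fun _ => enorm2_nonneg _

lemma smax_nonneg (A : Matrix ι ι' ℝ) : 0 ≤ smax A :=
  Real.iSup_nonneg fun _ => enorm2_nonneg _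

lemma smin_le_enorm2_mulVec (A : Matrix ι ι' ℝ) {u : ι' → ℝ} (hu : enorm2 u = 1) :
    smin A ≤ enorm2 (A *ᵥ u) :=
  ciInf_le ⟨0, by rintro _ ⟨_, rfl⟩; exact enorm2_nonneg _⟩
    (⟨u, hu⟩ : {u : ι' → ℝ // enorm2 u = 1})

lemma enorm2_mulVec_le_smax (A : Matrix ι ι' ℝ) {u : ι' → ℝ} (hu : enorm2 u = 1) :
    enorm2 (A *ᵥ u) ≤ smax A :=
  le_ciSup (bddAbove_enorm2_mulVec_sphere A) (⟨u, hu⟩ : {u : ι' → ℝ // enorm2 u = 1})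

lemma enorm2_mulVec_of_eq_enorm2_smul (A : Matrix ι ι' ℝ) {v u : ι' → ℝ}
    (hvu : v = enorm2 v • u) : enorm2 (A *ᵥ v) = enorm2 v * enorm2 (A *ᵥ u) := by
  conv_lhs => rw [hvu, mulVec_smul, enorm2_smul, abs_of_nonneg (enorm2_nonneg v)]

lemma smin_mul_enorm2_le (A : Matrix ι ι' ℝ) (v : ι' → ℝ) :
    smin A * enorm2 v ≤ enorm2 (A *ᵥ v) := by
  rcases eq_or_ne v 0 with rfl | hv
  · simp [enorm2_eq_zero.mpr rfl]
  obtain ⟨u, hu, hvu⟩ := exists_enorm2_eq_one_smul hv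
  rw [enorm2_mulVec_of_eq_enorm2_smul A hvu, mul_comm]
  exact mul_le_mul_of_nonneg_left (smin_le_enorm2_mulVec A hu) (enorm2_nonneg v)

lemma enorm2_mulVec_le_smax_mul (A : Matrix ι ι' ℝ) (v : ι' → ℝ) :
    enorm2 (A *ᵥ v) ≤ smax A * enorm2 v := by
  rcases eq_or_ne v 0 with rfl | hv
  · simp [enorm2_eq_zero.mpr rfl]
  obtain ⟨u, hu, hvu⟩ := exists_enorm2_eq_one_smul hv
  rw [enorm2_mulVec_of_eq_enorm2_smul A hvu, mul_comm (smax A)]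
  exact mul_le_mul_of_nonneg_left (enorm2_mulVec_le_smax A hu) (enorm2_nonneg v)

end SingularValues

open scoped Kronecker

lemma kroneckerMap_one_mulVec_apply {ι ι' κ : Type*} [Fintype ι'] [Fintype κ] [DecidableEq κ]
    (Γ : Matrix ι ι' ℝ) (w : ι' × κ → ℝ) (j : ι) (a : κ) :
    ((Γ ⊗ₖ (1 : Matrix κ κ ℝ)) *ᵥ w) (j, a) = (Γ *ᵥ fun i => w (i, a)) j := by
  simp [mulVec, dotProduct, kroneckerMap_apply, one_apply, Fintype.sum_prod_type]

section Blocks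

variable {ι ι' κ κ' : Type*} [Fintype ι] [Fintype ι'] [Fintype κ] [Fintype κ']

lemma enorm2_uncurry (w : ι → κ → ℝ) :
    enorm2 (Function.uncurry w) = enorm2 fun i => enorm2 (w i) := by
  conv_rhs => rw [enorm2]
  simp only [enorm2_sq]
  rw [enorm2, Fintype.sum_prod_type]
  rfl

lemma enorm2_eq_enorm2_columns (x : ι × κ → ℝ) :
    enorm2 x = enorm2 fun a => enorm2 fun i => x (i, a) := by
  conv_rhs => rw [enorm2]
  simp only [enorm2_sq]
  rw [enorm2, Fintype.sum_prod_type_right]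

lemma smin_mul_enorm2_le_kronecker [DecidableEq κ] (Γ : Matrix ι ι' ℝ) (w : ι' × κ → ℝ) :
    smin Γ * enorm2 w ≤ enorm2 ((Γ ⊗ₖ (1 : Matrix κ κ ℝ)) *ᵥ w) := by
  rw [enorm2_eq_enorm2_columns w, enorm2_eq_enorm2_columns]
  refine mul_enorm2_le_enorm2 (smin_nonneg Γ) (fun _ => enorm2_nonneg _) fun a => ?_
  simpa only [kroneckerMap_one_mulVec_apply] using smin_mul_enorm2_le Γ fun i => w (i, a)

lemma enorm2_kronecker_le_smax_mul [DecidableEq κ] (Γ : Matrix ι ι' ℝ) (w : ι' × κ → ℝ) :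
    enorm2 ((Γ ⊗ₖ (1 : Matrix κ κ ℝ)) *ᵥ w) ≤ smax Γ * enorm2 w := by
  rw [enorm2_eq_enorm2_columns w, enorm2_eq_enorm2_columns]
  refine enorm2_le_mul_enorm2 (smax_nonneg Γ) (fun _ => enorm2_nonneg _) fun a => ?_
  simpa only [kroneckerMap_one_mulVec_apply] using enorm2_mulVec_le_smax_mul Γ fun i => w (i, a)

lemma iInf_smin_mul_enorm2_le (D : ι → Matrix κ κ' ℝ) (r : ι → κ' → ℝ) :
    (⨅ i, smin (D i)) * enorm2 (Function.uncurry r) ≤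
      enorm2 (Function.uncurry fun i => D i *ᵥ r i) := by
  rw [enorm2_uncurry, enorm2_uncurry]
  refine mul_enorm2_le_enorm2 (Real.iInf_nonneg fun i => smin_nonneg _)
    (fun _ => enorm2_nonneg _) fun i => ?_
  calc (⨅ i, smin (D i)) * enorm2 (r i) ≤ smin (D i) * enorm2 (r i) :=
        mul_le_mul_of_nonneg_right (ciInf_le (Set.finite_range _).bddBelow i) (enorm2_nonneg _)
    _ ≤ enorm2 (D i *ᵥ r i) := smin_mul_enorm2_le _ _

lemma enorm2_le_iSup_smax_mul (D : ι → Matrix κ κ' ℝ) (r : ι → κ' → ℝ) :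
    enorm2 (Function.uncurry fun i => D i *ᵥ r i) ≤
      (⨆ i, smax (D i)) * enorm2 (Function.uncurry r) := by
  rw [enorm2_uncurry, enorm2_uncurry]
  refine enorm2_le_mul_enorm2 (Real.iSup_nonneg fun i => smax_nonneg _)
    (fun _ => enorm2_nonneg _) fun i => ?_
  calc enorm2 (D i *ᵥ r i) ≤ smax (D i) * enorm2 (r i) := enorm2_mulVec_le_smax_mul _ _
    _ ≤ (⨆ i, smax (D i)) * enorm2 (r i) :=
        mul_le_mul_of_nonneg_right
          (le_ciSup (f := fun i => smax (D i)) (Set.finite_range _).bddAbove i) (enorm2_nonneg _)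

end Blocks

theorem stmt_18_general {T s d d₀ : ℕ}
    (χ : Fin T → Fin s → ℝ)
    (Dm : Fin T → Matrix (Fin d) (Fin d₀) ℝ)
    (r : Fin T → Fin d₀ → ℝ)
    (Γ : Matrix (Fin s) (Fin T) ℝ) (hΓ : ∀ j i, Γ j i = χ i j)
    (G : Fin s × Fin d → ℝ)
    (hG : ∀ j a, G (j, a) = ∑ i, χ i j * (Dm i).mulVec (r i) a)
    (Rnorm : ℝ) (hR : Rnorm = Real.sqrt (∑ i, ∑ a, r i a ^ 2)) :
    smin Γ * (⨅ i, smin (Dm i)) * Rnorm ≤ enorm2 G ∧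
    enorm2 G ≤ smax Γ * (⨆ i, smax (Dm i)) * Rnorm := by
  set W := Function.uncurry fun i => Dm i *ᵥ r i
  have hGW : G = (Γ ⊗ₖ (1 : Matrix (Fin d) (Fin d) ℝ)) *ᵥ W := by
    funext ⟨j, a⟩
    rw [kroneckerMap_one_mulVec_apply, hG]
    simp [mulVec, dotProduct, hΓ, W]
  have hRr : Rnorm = enorm2 (Function.uncurry r) := by
    rw [hR, enorm2, Fintype.sum_prod_type]
    rfl
  rw [hGW, hRr, mul_assoc, mul_assoc]
  constructor
  · calc smin Γ * ((⨅ i, smin (Dm i)) * enorm2 (Function.uncurry r))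
        ≤ smin Γ * enorm2 W :=
          mul_le_mul_of_nonneg_left (iInf_smin_mul_enorm2_le Dm r) (smin_nonneg Γ)
      _ ≤ _ := smin_mul_enorm2_le_kronecker Γ W
  · calc enorm2 ((Γ ⊗ₖ (1 : Matrix (Fin d) (Fin d) ℝ)) *ᵥ W)
        ≤ smax Γ * enorm2 W := enorm2_kronecker_le_smax_mul Γ W
      _ ≤ smax Γ * ((⨆ i, smax (Dm i)) * enorm2 (Function.uncurry r)) :=
          mul_le_mul_of_nonneg_left (enorm2_le_iSup_smax_mul Dm r) (smax_nonneg Γ)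

/-- Bounds for the (negative) gradient of the loss with respect to the
skip weights: with `Γ = [χ₁, …, χ_T] ∈ ℝ^{s×T}` (`s ≥ T`), `D_i ∈ ℝ^{d×d₀}` (`d ≥ d₀`),
residuals `r_i ∈ ℝ^{d₀}`, and `G = Σ_i (χ_i ⊗ I_d) D_i r_i ∈ ℝ^{sd}` (where
`(χ ⊗ I_d)w` stacks the blocks `χ_j w`), one has
`σ_min(Γ) · min_i σ_min(D_i) · ‖R‖₂ ≤ ‖G‖₂ ≤ σ_max(Γ) · max_i σ_max(D_i) · ‖R‖₂`,
with `‖R‖₂ = (Σ_i ‖r_i‖₂²)^{1/2}`. -/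
theorem stmt_18 {T s d d₀ : ℕ}
    (hT : 0 < T) (hs : 0 < s) (hd : 0 < d) (hd₀ : 0 < d₀)
    (hsT : s ≥ T) (hdd : d ≥ d₀)
    (χ : Fin T → Fin s → ℝ)
    (Dm : Fin T → Matrix (Fin d) (Fin d₀) ℝ)
    (r : Fin T → Fin d₀ → ℝ)
    (Γ : Matrix (Fin s) (Fin T) ℝ) (hΓ : ∀ j i, Γ j i = χ i j)
    (G : Fin s × Fin d → ℝ)
    (hG : ∀ j a, G (j, a) = ∑ i, χ i j * (Dm i).mulVec (r i) a)
    (Rnorm : ℝ) (hR : Rnorm = Real.sqrt (∑ i, ∑ a, r i a ^ 2)) :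
    smin Γ * (⨅ i, smin (Dm i)) * Rnorm ≤ enorm2 G ∧
    enorm2 G ≤ smax Γ * (⨆ i, smax (Dm i)) * Rnorm :=
  stmt_18_general χ Dm r Γ hΓ G hG Rnorm hR
end

section
/- Let T, s, d, d₀ be positive integers with s ≥ T and d ≥ d₀. Let Γ = [χ₁, …, χ_T] ∈ ℝ^{s×T}, D_i ∈ ℝ^{d×d₀} and r_i ∈ ℝ^{d₀} for i ∈ [T], and set G := Σ_{i=1}^T (χ_i ⊗ I_d) D_i r_i ∈ ℝ^{sd}. If the vectors χ₁, …, χ_T are linearly independent and each D_i has rank d₀ (full column rank), then G = 0 if and only if r_i = 0 for all i ∈ [T]. (In network terms: if the skipped features χ^{l(1)}, …, χ^{l(T)} at some layer l are linearly independent and each Υ̃^{l−1}(x^{(i)}) Λ̃^l(x^{(i)}) has full row rank, then the gradient of the squared loss C(W) = ½Σ_i‖F(W,x^{(i)}) − y^{(i)}‖² with respect to the skip weight S̃^l vanishes if and only if F(W,x^{(i)}) = y^{(i)} for all i, i.e. C(W) = 0.) -/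
open Matrix

/-- With `G = Σ_i (χ_i ⊗ I_d) D_i r_i ∈ ℝ^{sd}` (where `(χ ⊗ I_d)w`
stacks the blocks `χ_j w`): if the skipped features `χ₁, …, χ_T` are linearly independent
and every `D_i ∈ ℝ^{d×d₀}` has full column rank, then `G = 0` if and only if `r_i = 0`
for all `i`, i.e. the gradient with respect to the skip weight vanishes iff the loss is
zero. -/
theorem stmt_19 {T s d d₀ : ℕ}
    (hT : 0 < T) (hs : 0 < s) (hd : 0 < d) (hd₀ : 0 < d₀)
    (hsT : s ≥ T) (hdd : d ≥ d₀)
    (χ : Fin T → Fin s → ℝ)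
    (Dm : Fin T → Matrix (Fin d) (Fin d₀) ℝ)
    (r : Fin T → Fin d₀ → ℝ)
    (G : Fin s × Fin d → ℝ)
    (hG : ∀ j a, G (j, a) = ∑ i, χ i j * (Dm i).mulVec (r i) a)
    (hχ : LinearIndependent ℝ χ)
    (hDm : ∀ i, ∀ v : Fin d₀ → ℝ, (Dm i).mulVec v = 0 → v = 0) :
    G = 0 ↔ ∀ i, r i = 0 := by
  constructor
  · intro hG0
    intro i
    have hzero : ∀ a, (Dm i).mulVec (r i) a = 0 := by
      intro a
      have key : ∀ g : Fin T → ℝ, (∑ k, g k • χ k) = 0 → ∀ k, g k = 0 :=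
        Fintype.linearIndependent_iff.mp hχ
      have hsum : (∑ k, (fun k => (Dm k).mulVec (r k) a) k • χ k) = 0 := by
        funext j
        have := hG j a
        rw [show G (j, a) = 0 from congrFun hG0 (j, a)] at this
        simp only [Finset.sum_apply, Pi.smul_apply, smul_eq_mul, Pi.zero_apply]
        rw [Finset.sum_congr rfl (fun k _ => mul_comm ((Dm k).mulVec (r k) a) (χ k j))]
        exact this.symm
      exact key _ hsum i
    exact hDm i (r i) (funext hzero)
  · intro hr
    funext ja
    obtain ⟨j, a⟩ := ja
    rw [hG j a]
    simp [hr]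
end
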